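/- Let n ≥ 3 and let κ be a real number with 1 < κ < 1 + 1/(n-2). Then a finite sequence (i_1, …, i_m) of vertices of ZMod n is a legal play from u_κ if and only if it is a (<-1)-play from ρ^(0) (viewed as a real configuration). -/

import Mathlib

/-- The affine Cartan matrix of type `Ã_{n-1}`, indexed by `ZMod n`. -/
def A (n : ℕ) (i j : ZMod n) : ℤ :=
  if i = j then 2 else if j = i + 1 ∨ j = i - 1 then -1 else 0

/-- Firing vertex `i` in type `Ã_{n-1}`. -/
def fire (n : ℕ) (i : ZMod n) (v : ZMod n → ℝ) : ZMod n → ℝ :=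
  fun j => v j - (A n i j : ℝ) * v i

/-- The configuration resulting from firing the vertices in the list `l` successively. -/
def playResult (n : ℕ) : (ZMod n → ℝ) → List (ZMod n) → (ZMod n → ℝ)
  | v, [] => v
  | v, i :: l => playResult n (fire n i v) l

/-- `IsPlay n θ v l` : the list `l` is a sequence of successive firings starting at `v`
in which each fired vertex has amplitude strictly less than `θ` at the time it is fired.
With `θ = 0` this is a legal play; with `θ = -1` a `(<-1)`-play. -/
def IsPlay (n : ℕ) (θ : ℝ) : (ZMod n → ℝ) → List (ZMod n) → Prop
  | _, [] => True
  | v, i :: l => v i < θ ∧ IsPlay n θ (fire n i v) l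

/-- The configuration `ρ^(a)` : value `-(n-1)` at `a` and `1` elsewhere. -/
def rho (n : ℕ) (a : ZMod n) : ZMod n → ℝ :=
  fun j => if j = a then 1 - (n : ℝ) else 1

/-- The extending vertex `ι0`: the class of `n/2` if `n` is even, and `0` if `n` is odd. -/
def iota0 (n : ℕ) : ZMod n :=
  if Even n then ((n / 2 : ℕ) : ZMod n) else 0

/-- The configuration `u_κ = ρ^(0) + κ·e_0`. -/
def ukappa (n : ℕ) (κ : ℝ) : ZMod n → ℝ :=
  fun j => if j = 0 then κ - ((n : ℝ) - 1) else 1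

/-!
Write a configuration as `j ↦ (rk j - rk (j - 1)) + c * (1 - (p j - p (j - 1)))`, where
`rk : ZMod n → {0, …, n - 1}` is a bijection and `p j ∈ ℤ` lifts `j`. Firing `i` exchanges
`rk (i - 1)` and `rk i`, and exchanges `p (i - 1)` and `p i` up to a shift by `±1`, so this shape
is preserved. Starting from `rk = p = val`, the case `c = 0` is the play from `ρ^(0)` and the case
`c = κ / n` is the play from `u_κ`, driven by the same moves.

Along a `(<-1)`-play, `p` keeps increasing by steps in `[1, n - 1]` along increasing `rk`.
Telescoping, the integer `q = (1 - (p j - p (j - 1))) / n` satisfies `1 ≤ q ≤ -r` (strictly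
unless `r = -1`) when `r = rk j - rk (j - 1) < 0`, and `1 - r ≤ q ≤ 0` when `r > 0`. As
`|r| ≤ n - 1` and `0 < (κ - 1) (n - 2) < 1`, the `u_κ`-amplitude `r + κ q` is negative exactly
when `r < -1`.
-/

open Function

variable {n : ℕ}

lemma ZMod.natCast_ne_zero_of_lt {k : ℕ} (hk : 0 < k) (hkn : k < n) : (k : ZMod n) ≠ 0 := by
  rw [Ne, ZMod.natCast_eq_zero_iff]
  exact fun h => (Nat.le_of_dvd hk h).not_gt hkn

lemma ZMod.sub_one_ne_self (hn : 2 ≤ n) (i : ZMod n) : i - 1 ≠ i :=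
  fun h => ZMod.natCast_ne_zero_of_lt (k := 1) one_pos hn (by simpa using h)

lemma ZMod.val_sub_val_sub_one [NeZero n] (j : ZMod n) :
    (j.val : ℤ) - (j - 1).val = if j = 0 then 1 - (n : ℤ) else 1 := by
  obtain ⟨m, rfl⟩ : ∃ m, n = m + 1 :=
    ⟨n - 1, (Nat.succ_pred_eq_of_pos (NeZero.pos n)).symm⟩
  split_ifs with hj
  · subst hj
    rw [zero_sub, ZMod.val_neg_one, ZMod.val_zero]
    push_cast; ring
  · have hpos : 1 ≤ j.val := ZMod.val_pos.mpr hj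
    have h1 : (1 : ZMod (m + 1)).val = 1 := by
      rw [ZMod.val_one_eq_one_mod, Nat.mod_eq_of_lt (by have := ZMod.val_lt j; omega)]
    rw [ZMod.val_sub (by rwa [h1]), h1]
    omega

lemma A_self (i : ZMod n) : A n i i = 2 := if_pos rfl

lemma A_of_adj {i j : ZMod n} (hij : i ≠ j) (h : j = i + 1 ∨ j = i - 1) : A n i j = -1 := by
  simp [A, hij, h]

lemma A_of_not_adj {i j : ZMod n} (hij : i ≠ j) (h₁ : j ≠ i + 1) (h₂ : j ≠ i - 1) :
    A n i j = 0 := by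
  simp [A, hij, h₁, h₂]

def diffConfig (c : ℝ) (rk p : ZMod n → ℤ) : ZMod n → ℝ :=
  fun j => (rk j - rk (j - 1) : ℤ) - c * (p j - p (j - 1) - 1 : ℤ)

def swapLift (p : ZMod n → ℤ) (i : ZMod n) : ZMod n → ℤ :=
  update (update p i (p (i - 1) + 1)) (i - 1) (p i - 1)

lemma fire_diffConfig (hn : 3 ≤ n) (c : ℝ) (rk p : ZMod n → ℤ) (i : ZMod n) :
    fire n i (diffConfig c rk p) = diffConfig c (rk ∘ Equiv.swap (i - 1) i) (swapLift p i) := by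
  have h1 : (1 : ZMod n) ≠ 0 := mod_cast ZMod.natCast_ne_zero_of_lt (k := 1) one_pos (by omega)
  have h2 : (2 : ZMod n) ≠ 0 := mod_cast ZMod.natCast_ne_zero_of_lt (k := 2) two_pos (by omega)
  have e1 : i - 1 ≠ i := ZMod.sub_one_ne_self (by omega) i
  have e2 : i + 1 ≠ i := fun h => h1 (by linear_combination h)
  have e3 : i + 1 ≠ i - 1 := fun h => h2 (by linear_combination h)
  have e4 : i - 1 - 1 ≠ i := fun h => h2 (by linear_combination -h)
  have e5 : i - 1 - 1 ≠ i - 1 := ZMod.sub_one_ne_self (by omega) (i - 1)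
  ext j
  by_cases hi : j = i
  · subst hi
    simp only [fire, diffConfig, swapLift, A_self, comp_apply, Equiv.swap_apply_left,
      Equiv.swap_apply_right, update_self, update_of_ne e1.symm]
    push_cast; ring
  by_cases hm : j = i - 1
  · subst hm
    simp only [fire, diffConfig, swapLift, A_of_adj e1.symm (.inr rfl), comp_apply,
      Equiv.swap_apply_left, Equiv.swap_apply_of_ne_of_ne e5 e4, update_self,
      update_of_ne e4, update_of_ne e5]
    push_cast; ring
  by_cases hp : j = i + 1
  · subst hp
    simp only [fire, diffConfig, swapLift, A_of_adj e2.symm (.inl rfl), comp_apply,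
      add_sub_cancel_right, Equiv.swap_apply_right, Equiv.swap_apply_of_ne_of_ne e3 e2,
      update_self, update_of_ne e3, update_of_ne e2, update_of_ne e1.symm]
    push_cast; ring
  have f1 : j - 1 ≠ i := fun h => hp (by linear_combination h)
  have f2 : j - 1 ≠ i - 1 := fun h => hi (by linear_combination h)
  simp only [fire, diffConfig, swapLift, A_of_not_adj (Ne.symm hi) hp hm, comp_apply,
    Equiv.swap_apply_of_ne_of_ne hm hi, Equiv.swap_apply_of_ne_of_ne f2 f1,
    update_of_ne hm, update_of_ne hi, update_of_ne f1, update_of_ne f2]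
  push_cast; ring

lemma add_mul_lt_zero_iff_of_neg {κ : ℝ} (hκ1 : 1 < κ) (hκ2 : (κ - 1) * (n - 2) < 1)
    {r q : ℤ} (hrn : 1 - (n : ℤ) ≤ r) (hq : 1 ≤ q) (hqr : q + r ≤ 0)
    (hqr' : r < -1 → q + r < 0) :
    (r : ℝ) + κ * q < 0 ↔ (r : ℝ) < -1 := by
  rcases (show r = -1 ∨ r < -1 by omega) with rfl | hlt
  · obtain rfl : q = 1 := by omega
    norm_num
    linarith
  · refine iff_of_true ?_ (by exact_mod_cast hlt)
    have hq' : (q : ℝ) + 1 ≤ -r := by exact_mod_cast (show q + 1 ≤ -r by omega)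
    have hr' : (1 - n : ℝ) ≤ r := by exact_mod_cast hrn
    have hq0 : (1 : ℝ) ≤ q := by exact_mod_cast hq
    nlinarith

lemma add_mul_nonneg_of_pos {κ : ℝ} (hκ1 : 1 < κ) (hκ2 : (κ - 1) * (n - 2) < 1)
    {r q : ℤ} (hrn : r ≤ (n : ℤ) - 1) (hq : q ≤ 0) (hqr : 1 ≤ q + r) :
    0 ≤ (r : ℝ) + κ * q := by
  have hq' : (1 - r : ℝ) ≤ q := by exact_mod_cast (show 1 - r ≤ q by omega)
  have hr' : (r : ℝ) ≤ n - 1 := by exact_mod_cast hrn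
  have hq0 : (q : ℝ) ≤ 0 := by exact_mod_cast hq
  nlinarith

structure IsAdmissible (rk p : ZMod n → ℤ) : Prop where
  injective : Injective rk
  range_eq : Set.range rk = Set.Icc 0 ((n : ℤ) - 1)
  intCast_lift : ∀ j, (p j : ZMod n) = j
  lift_step : ∀ i j, rk j = rk i + 1 → 1 ≤ p j - p i ∧ p j - p i ≤ n - 1

namespace IsAdmissible

variable {rk p : ZMod n → ℤ}

lemma mem_Icc (h : IsAdmissible rk p) (j : ZMod n) : rk j ∈ Set.Icc 0 ((n : ℤ) - 1) :=
  h.range_eq ▸ Set.mem_range_self j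

lemma intCast_sub_lift (h : IsAdmissible rk p) (a b : ZMod n) :
    ((p b - p a : ℤ) : ZMod n) = b - a := by
  push_cast; rw [h.intCast_lift, h.intCast_lift]

lemma lift_sub_bounds (h : IsAdmissible rk p) {i j : ZMod n} (hij : rk i ≤ rk j) :
    rk j - rk i ≤ p j - p i ∧ p j - p i ≤ (rk j - rk i) * (n - 1) := by
  generalize hv : rk j = v at hij ⊢
  induction v, hij using Int.leInduction generalizing j with
  | base =>
    obtain rfl := h.injective hv
    simp
  | succ v hiv ih =>
    obtain ⟨k, hk⟩ : v ∈ Set.range rk := by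
      obtain ⟨hi0, -⟩ := h.mem_Icc i
      obtain ⟨-, hjn⟩ := h.mem_Icc j
      rw [h.range_eq]; constructor <;> omega
    have hki := ih hk
    have hjk := h.lift_step k j (by omega)
    constructor <;> nlinarith

lemma diffConfig_lt_zero_iff (h : IsAdmissible rk p) (hn : 3 ≤ n) {κ : ℝ} (hκ1 : 1 < κ)
    (hκ2 : (κ - 1) * (n - 2) < 1) (i : ZMod n) :
    diffConfig (κ / n) rk p i < 0 ↔ diffConfig 0 rk p i < -1 := by
  obtain ⟨q, hq⟩ : (n : ℤ) ∣ 1 - (p i - p (i - 1)) := by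
    rw [← ZMod.intCast_zmod_eq_zero_iff_dvd, Int.cast_sub, h.intCast_sub_lift]
    simp
  set r := rk i - rk (i - 1) with hr
  have hamp : diffConfig (κ / n) rk p i = r + κ * q := by
    have : (n : ℝ) ≠ 0 := by positivity
    simp only [diffConfig, ← hr]
    rw [show p i - p (i - 1) - 1 = -(n * q) by linarith]
    push_cast
    field_simp
    ring
  have hρ : diffConfig 0 rk p i = r := by simp [diffConfig, ← hr]
  rw [hamp, hρ]
  have hr0 : r ≠ 0 := fun h0 => ZMod.sub_one_ne_self (by omega) i (h.injective (by omega))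
  obtain ⟨hi0, hin⟩ := h.mem_Icc i
  obtain ⟨hi0', hin'⟩ := h.mem_Icc (i - 1)
  rcases lt_or_gt_of_ne hr0 with hneg | hpos
  · obtain ⟨hs1, hs2⟩ := h.lift_sub_bounds (i := i) (j := i - 1) (by omega)
    exact add_mul_lt_zero_iff_of_neg (n := n) hκ1 hκ2 (by omega) (by nlinarith)
      (by nlinarith) (fun _ => by nlinarith)
  · obtain ⟨hs1, hs2⟩ := h.lift_sub_bounds (i := i - 1) (j := i) (by omega)
    have := add_mul_nonneg_of_pos (n := n) (r := r) (q := q) hκ1 hκ2 (by omega)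
      (by nlinarith) (by nlinarith)
    exact iff_of_false (by linarith) (by exact_mod_cast (show ¬r < -1 by omega))

lemma swapLift_step (h : IsAdmissible rk p) (hn : 3 ≤ n) {i : ZMod n}
    (hfire : rk i + 2 ≤ rk (i - 1)) {a b : ZMod n}
    (hab : rk (Equiv.swap (i - 1) i b) = rk (Equiv.swap (i - 1) i a) + 1) :
    1 ≤ swapLift p i b - swapLift p i a ∧ swapLift p i b - swapLift p i a ≤ n - 1 := by
  have e1 : i - 1 ≠ i := ZMod.sub_one_ne_self (by omega) i
  have hstep := h.lift_step _ _ hab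
  -- The firing changes the steps into and out of `i - 1` and `i` by `±1`; they stay in
  -- `[1, n - 1]` because a step of `1` or `n - 1` only joins neighbours (`hres`, `hres'`).
  have hres : ∀ {x y : ZMod n}, p x - p y = 1 → x - y = 1 := fun hxy => by
    rw [← h.intCast_sub_lift, hxy, Int.cast_one]
  have hres' : ∀ {x y : ZMod n}, p x - p y = n - 1 → x - y = -1 := fun hxy => by
    rw [← h.intCast_sub_lift, hxy]; simp
  have hne : ∀ {x : ZMod n}, x ≠ i → x ≠ i - 1 → swapLift p i x = p x := fun h h' => by
    rw [swapLift, update_of_ne h', update_of_ne h]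
  have hpi : swapLift p i i = p (i - 1) + 1 := by
    rw [swapLift, update_of_ne e1.symm, update_self]
  have hpi' : swapLift p i (i - 1) = p i - 1 := by rw [swapLift, update_self]
  rcases eq_or_ne i a with rfl | ha
  · rcases eq_or_ne i b with rfl | hb
    · omega
    rcases eq_or_ne (i - 1) b with rfl | hb'
    · simp only [Equiv.swap_apply_left, Equiv.swap_apply_right] at hab; omega
    simp only [Equiv.swap_apply_right, Equiv.swap_apply_of_ne_of_ne hb'.symm hb.symm] at hstep
    have : p b - p (i - 1) ≠ 1 := fun h => hb (by linear_combination -hres h)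
    rw [hpi, hne hb.symm hb'.symm]; omega
  rcases eq_or_ne (i - 1) a with rfl | ha'
  · rcases eq_or_ne i b with rfl | hb
    · simp only [Equiv.swap_apply_left, Equiv.swap_apply_right] at hab; omega
    rcases eq_or_ne (i - 1) b with rfl | hb'
    · omega
    simp only [Equiv.swap_apply_left, Equiv.swap_apply_of_ne_of_ne hb'.symm hb.symm] at hstep
    have : p b - p i ≠ n - 1 := fun h => hb' (by linear_combination -hres' h)
    rw [hpi', hne hb.symm hb'.symm]; omega
  simp only [Equiv.swap_apply_of_ne_of_ne ha'.symm ha.symm] at hstep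
  rcases eq_or_ne i b with rfl | hb
  · simp only [Equiv.swap_apply_right] at hstep
    have : p (i - 1) - p a ≠ n - 1 := fun h => ha (by linear_combination hres' h)
    rw [hpi, hne ha.symm ha'.symm]; omega
  rcases eq_or_ne (i - 1) b with rfl | hb'
  · simp only [Equiv.swap_apply_left] at hstep
    have : p i - p a ≠ 1 := fun h => ha' (by linear_combination hres h)
    rw [hpi', hne ha.symm ha'.symm]; omega
  simp only [Equiv.swap_apply_of_ne_of_ne hb'.symm hb.symm] at hstep
  rwa [hne hb.symm hb'.symm, hne ha.symm ha'.symm]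

lemma swap (h : IsAdmissible rk p) (hn : 3 ≤ n) {i : ZMod n} (hfire : rk i + 2 ≤ rk (i - 1)) :
    IsAdmissible (rk ∘ Equiv.swap (i - 1) i) (swapLift p i) where
  injective := h.injective.comp (Equiv.injective _)
  range_eq := (Equiv.surjective _).range_comp rk ▸ h.range_eq
  intCast_lift j := by
    simp only [swapLift, update_apply]
    split_ifs with h₁ h₂
    · push_cast; rw [h.intCast_lift, h₁]
    · push_cast; rw [h.intCast_lift, h₂]; ring
    · exact h.intCast_lift j
  lift_step _ _ hab := h.swapLift_step hn hfire hab

theorem isPlay_diffConfig_iff (h : IsAdmissible rk p) (hn : 3 ≤ n) {κ : ℝ} (hκ1 : 1 < κ)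
    (hκ2 : (κ - 1) * (n - 2) < 1) (l : List (ZMod n)) :
    IsPlay n 0 (diffConfig (κ / n) rk p) l ↔ IsPlay n (-1) (diffConfig 0 rk p) l := by
  induction l generalizing rk p with
  | nil => simp only [IsPlay]
  | cons i l ih =>
    simp only [IsPlay, fire_diffConfig hn, h.diffConfig_lt_zero_iff hn hκ1 hκ2]
    refine and_congr_right fun hfire => ih (h.swap hn ?_)
    have : ((rk i - rk (i - 1) : ℤ) : ℝ) < -1 := by simpa [diffConfig] using hfire
    have : rk i - rk (i - 1) < -1 := by exact_mod_cast this
    omega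

end IsAdmissible

lemma isAdmissible_val [NeZero n] :
    IsAdmissible (fun j : ZMod n => (j.val : ℤ)) (fun j => j.val) where
  injective := Nat.cast_injective.comp (ZMod.val_injective n)
  range_eq := by
    ext v
    simp only [Set.mem_range, Set.mem_Icc]
    constructor
    · rintro ⟨j, rfl⟩
      have := ZMod.val_lt j
      omega
    · rintro ⟨hv0, hvn⟩
      refine ⟨(v.toNat : ZMod n), ?_⟩
      rw [ZMod.val_natCast_of_lt (by omega)]
      omega
  intCast_lift j := by simp
  lift_step i j hij := by
    have := ZMod.val_lt j
    omega

lemma diffConfig_val [NeZero n] (c : ℝ) :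
    diffConfig c (fun j : ZMod n => (j.val : ℤ)) (fun j => j.val) =
      fun j => if j = 0 then 1 - (n : ℝ) + c * n else 1 := by
  ext j
  simp only [diffConfig, ZMod.val_sub_val_sub_one]
  split_ifs <;> push_cast <;> ring

lemma ukappa_eq_diffConfig [NeZero n] (κ : ℝ) :
    ukappa n κ = diffConfig (κ / n) (fun j => (j.val : ℤ)) (fun j => j.val) := by
  rw [diffConfig_val]
  ext j
  simp only [ukappa]
  split_ifs
  · rw [div_mul_cancel₀ _ (Nat.cast_ne_zero.mpr (NeZero.ne n))]
    ring
  · rfl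

lemma rho_zero_eq_diffConfig [NeZero n] :
    rho n 0 = diffConfig 0 (fun j => (j.val : ℤ)) (fun j => j.val) := by
  rw [diffConfig_val]
  ext j
  simp [rho]

/-- For `1 < κ < 1 + 1/(n-2)`, a sequence of vertices is a legal play from `u_κ` if and
only if it is a `(<-1)`-play from `ρ^(0)`. -/
theorem legal_play_iff_lt_neg_one_play (n : ℕ) [NeZero n] (hn : 3 ≤ n)
    (κ : ℝ) (hκ1 : 1 < κ) (hκ2 : κ < 1 + 1 / ((n : ℝ) - 2)) :
    ∀ l : List (ZMod n), IsPlay n 0 (ukappa n κ) l ↔ IsPlay n (-1) (rho n 0) l := by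
  have hn2 : (0 : ℝ) < n - 2 := by
    have : (3 : ℝ) ≤ n := by exact_mod_cast hn
    linarith
  have hκ : (κ - 1) * (n - 2) < 1 := by
    rw [← lt_div_iff₀ hn2]
    linarith
  intro l
  rw [ukappa_eq_diffConfig, rho_zero_eq_diffConfig]
  exact isAdmissible_val.isPlay_diffConfig_iff hn hκ1 hκ l
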